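/- Let 𝕂 be a Krein space with fundamental symmetry J and let {(W_i, v_i) : i ∈ I} be a J-fusion frame for 𝕂. Then {(W_i, v_i) : i ∈ I_±} is a fusion frame for the Hilbert space (M_±, ±[·,·]); that is, there exist constants −∞ < B₋ ≤ A₋ < 0 < A₊ ≤ B₊ < ∞ such that A_±[f,f] ≤ Σ_{i∈I_±} v_i² |[π_{W_i}(Jf), f]| ≤ B_±[f,f] for every f ∈ M_±. -/

import Mathlib

noncomputable section

open scoped InnerProductSpace ENNReal

attribute [local instance] Classical.propDecidable

namespace JFF

instance : Fact ((1 : ℝ≥0∞) ≤ 2) := ⟨by norm_num⟩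

variable {𝕂 : Type*} [NormedAddCommGroup 𝕂] [InnerProductSpace ℂ 𝕂] [CompleteSpace 𝕂]
variable {ι : Type*}

/-- The indefinite inner product `[x, y]` induced by the fundamental symmetry `J`;
with Mathlib's convention (inner products conjugate-linear in the *first* variable),
the paper's `[x, y] = ⟨Jx, y⟩`, which is linear in `x`, is `⟪J y, x⟫_ℂ`. -/
def ip (J : 𝕂 →L[ℂ] 𝕂) (x y : 𝕂) : ℂ := @inner ℂ _ _ (J y) x

/-- `J` is a fundamental symmetry: a bounded selfadjoint operator with `J ∘ J = 1`. -/
def IsFundSym (J : 𝕂 →L[ℂ] 𝕂) : Prop := IsSelfAdjoint J ∧ J ∘L J = 1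

/-- `W` is a `J`-nonnegative subspace. -/
def JNonneg (J : 𝕂 →L[ℂ] 𝕂) (W : Submodule ℂ 𝕂) : Prop :=
  ∀ f ∈ W, 0 ≤ (ip J f f).re

/-- `W` is a `J`-nonpositive subspace. -/
def JNonpos (J : 𝕂 →L[ℂ] 𝕂) (W : Submodule ℂ 𝕂) : Prop :=
  ∀ f ∈ W, (ip J f f).re ≤ 0

/-- `W` is a `J`-negative subspace. -/
def JNeg (J : 𝕂 →L[ℂ] 𝕂) (W : Submodule ℂ 𝕂) : Prop :=
  ∀ f ∈ W, f ≠ 0 → (ip J f f).re < 0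

/-- `W` is uniformly `J`-positive. -/
def UnifJPos (J : 𝕂 →L[ℂ] 𝕂) (W : Submodule ℂ 𝕂) : Prop :=
  ∃ α : ℝ, 0 < α ∧ ∀ f ∈ W, α * ‖f‖ ^ 2 ≤ (ip J f f).re

/-- `W` is uniformly `J`-negative. -/
def UnifJNeg (J : 𝕂 →L[ℂ] 𝕂) (W : Submodule ℂ 𝕂) : Prop :=
  ∃ α : ℝ, 0 < α ∧ ∀ f ∈ W, (ip J f f).re ≤ -(α * ‖f‖ ^ 2)

/-- `W` is maximal uniformly `J`-positive. -/
def MaxUnifJPos (J : 𝕂 →L[ℂ] 𝕂) (W : Submodule ℂ 𝕂) : Prop :=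
  UnifJPos J W ∧ ∀ W' : Submodule ℂ 𝕂, UnifJPos J W' → W ≤ W' → W' = W

/-- `W` is maximal uniformly `J`-negative. -/
def MaxUnifJNeg (J : 𝕂 →L[ℂ] 𝕂) (W : Submodule ℂ 𝕂) : Prop :=
  UnifJNeg J W ∧ ∀ W' : Submodule ℂ 𝕂, UnifJNeg J W' → W ≤ W' → W' = W

/-- `W` is a maximal `J`-nonnegative subspace. -/
def MaxJNonneg (J : 𝕂 →L[ℂ] 𝕂) (W : Submodule ℂ 𝕂) : Prop :=
  JNonneg J W ∧ ∀ W' : Submodule ℂ 𝕂, JNonneg J W' → W ≤ W' → W' = W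

/-- `W` is a maximal `J`-nonpositive subspace. -/
def MaxJNonpos (J : 𝕂 →L[ℂ] 𝕂) (W : Submodule ℂ 𝕂) : Prop :=
  JNonpos J W ∧ ∀ W' : Submodule ℂ 𝕂, JNonpos J W' → W ≤ W' → W' = W

/-- The `J`-orthogonal companion `M^{[⊥]} = {f | [f, m] = 0 ∀ m ∈ M}`. -/
def JOrth (J : 𝕂 →L[ℂ] 𝕂) (M : Submodule ℂ 𝕂) : Submodule ℂ 𝕂 where
  carrier := {f | ∀ m ∈ M, ip J f m = 0}
  add_mem' := by
    intro a b ha hb m hm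
    simp only [ip, inner_add_right] at *
    rw [ha m hm, hb m hm, add_zero]
  zero_mem' := by
    intro m hm
    simp [ip]
  smul_mem' := by
    intro c a ha m hm
    simp only [ip, inner_smul_right] at *
    rw [ha m hm, mul_zero]

/-- A closed subspace is regular (projectively complete) if `𝕂 = M ⊕ M^{[⊥]}`. -/
def Regular (J : 𝕂 →L[ℂ] 𝕂) (M : Submodule ℂ 𝕂) : Prop :=
  IsClosed (M : Set 𝕂) ∧ IsCompl M (JOrth J M)

/-- The orthogonal projection `π_M` onto `M` as an endomorphism of `𝕂`
(junk value `0` if `M` is not closed). -/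
def pr (M : Submodule ℂ 𝕂) : 𝕂 →L[ℂ] 𝕂 :=
  if h : IsClosed (M : Set 𝕂) then
    letI : CompleteSpace M := h.completeSpace_coe
    M.subtypeL ∘L M.orthogonalProjectionOnto
  else 0

/-- The Gramian operator `G_M = π_M ∘ J|_M : M → M`
(junk value `0` if `M` is not closed). -/
def gram (J : 𝕂 →L[ℂ] 𝕂) (M : Submodule ℂ 𝕂) : M →L[ℂ] M :=
  if h : IsClosed (M : Set 𝕂) then
    letI : CompleteSpace M := h.completeSpace_coe
    M.orthogonalProjectionOnto ∘L (J ∘L M.subtypeL)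
  else 0

/-- The reduced minimum modulus `γ(T) = inf {‖Tx‖ : x ∈ N(T)ᗮ, ‖x‖ = 1}`. -/
def rmm {E F : Type*} [NormedAddCommGroup E] [InnerProductSpace ℂ E]
    [NormedAddCommGroup F] [InnerProductSpace ℂ F] (T : E →L[ℂ] F) : ℝ :=
  sInf ((fun x => ‖T x‖) '' {x | x ∈ (LinearMap.ker (T : E →ₗ[ℂ] F))ᗮ ∧ ‖x‖ = 1})

/-- `M_S`: the closure of `Σ_{i ∈ S} W i`. -/
def Mspace (W : ι → Submodule ℂ 𝕂) (S : Set ι) : Submodule ℂ 𝕂 :=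
  (⨆ i ∈ S, W i).topologicalClosure

/-- The closed span of `{f i : i ∈ S}`. -/
def Mspan (f : ι → 𝕂) (S : Set ι) : Submodule ℂ 𝕂 :=
  (Submodule.span ℂ (f '' S)).topologicalClosure

/-- The subspace of the ℓ²-direct sum consisting of families supported on `S`. -/
def supp (W : ι → Submodule ℂ 𝕂) (S : Set ι) :
    Submodule ℂ (lp (fun i => W i) 2) where
  carrier := {x | ∀ i ∉ S, x i = 0}
  add_mem' := by
    intro a b ha hb i hi
    have h : (a + b : lp (fun i => W i) 2) i = a i + b i := by
      rw [lp.coeFn_add]; rfl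
    rw [h, ha i hi, hb i hi, add_zero]
  zero_mem' := by
    intro i hi
    have h : (0 : lp (fun i => W i) 2) i = 0 := by
      rw [lp.coeFn_zero]; rfl
    rw [h]
  smul_mem' := by
    intro c a ha i hi
    have h : (c • a : lp (fun i => W i) 2) i = c • a i := by
      rw [lp.coeFn_smul]; rfl
    rw [h, ha i hi, smul_zero]

/-- `T` is the synthesis operator of the weighted family of subspaces `(W, v)`:
`T {f_i} = Σ_i v_i f_i` (an unconditionally convergent sum). -/
def IsSynth (W : ι → Submodule ℂ 𝕂) (v : ι → ℝ)
    (T : lp (fun i => W i) 2 →L[ℂ] 𝕂) : Prop :=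
  ∀ x : lp (fun i => W i) 2, HasSum (fun i => (v i : ℂ) • (x i : 𝕂)) (T x)

/-- The range of `T ∘ P_S` where `P_S` is the orthogonal projection onto the
families supported on `S`, i.e. the image under `T` of the families supported on `S`. -/
def rng {W : ι → Submodule ℂ 𝕂} (T : lp (fun i => W i) 2 →L[ℂ] 𝕂)
    (S : Set ι) : Submodule ℂ 𝕂 :=
  (supp W S).map (T : lp (fun i => W i) 2 →ₗ[ℂ] 𝕂)

/-- `(W, v)` (with the partition `Ipos`, `Ineg` of the index set and synthesis
operator `T`) is a `J`-fusion frame for `𝕂`. -/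
structure IsJFusionFrame (J : 𝕂 →L[ℂ] 𝕂) (W : ι → Submodule ℂ 𝕂) (v : ι → ℝ)
    (Ipos Ineg : Set ι) (T : lp (fun i => W i) 2 →L[ℂ] 𝕂) : Prop where
  partition : ∀ i : ι, (i ∈ Ipos ∧ i ∉ Ineg) ∨ (i ∈ Ineg ∧ i ∉ Ipos)
  pos_nonneg : ∀ i ∈ Ipos, JNonneg J (W i)
  neg_neg : ∀ i ∈ Ineg, JNeg J (W i)
  weights : ∀ i, 0 < v i
  synth : IsSynth W v T
  max_pos : MaxUnifJPos J (rng T Ipos)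
  max_neg : MaxUnifJNeg J (rng T Ineg)

/-- `Bm ≤ Am < 0 < Ap ≤ Bp` are `J`-fusion frame bounds for `(W, v)`:
`A_± [f,f] ≤ Σ_{i ∈ I_±} v_i² |[π_{W_i} J f, f]| ≤ B_± [f,f]` for `f ∈ M_±`. -/
def JFusionBounds (J : 𝕂 →L[ℂ] 𝕂) (W : ι → Submodule ℂ 𝕂) (v : ι → ℝ)
    (Ipos Ineg : Set ι) (Bm Am Ap Bp : ℝ) : Prop :=
  Bm ≤ Am ∧ Am < 0 ∧ 0 < Ap ∧ Ap ≤ Bp ∧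
  (∀ f ∈ Mspace W Ipos,
    Summable (fun i : Ipos => v (i : ι) ^ 2 * ‖ip J (pr (W (i : ι)) (J f)) f‖) ∧
    Ap * (ip J f f).re ≤ ∑' i : Ipos, v (i : ι) ^ 2 * ‖ip J (pr (W (i : ι)) (J f)) f‖ ∧
    ∑' i : Ipos, v (i : ι) ^ 2 * ‖ip J (pr (W (i : ι)) (J f)) f‖ ≤ Bp * (ip J f f).re) ∧
  (∀ f ∈ Mspace W Ineg,
    Summable (fun i : Ineg => v (i : ι) ^ 2 * ‖ip J (pr (W (i : ι)) (J f)) f‖) ∧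
    Am * (ip J f f).re ≤ ∑' i : Ineg, v (i : ι) ^ 2 * ‖ip J (pr (W (i : ι)) (J f)) f‖ ∧
    ∑' i : Ineg, v (i : ι) ^ 2 * ‖ip J (pr (W (i : ι)) (J f)) f‖ ≤ Bm * (ip J f f).re)

/-- `(Bm, Am, Ap, Bp)` are the *optimal* `J`-fusion frame bounds. -/
def OptJFusionBounds (J : 𝕂 →L[ℂ] 𝕂) (W : ι → Submodule ℂ 𝕂) (v : ι → ℝ)
    (Ipos Ineg : Set ι) (Bm Am Ap Bp : ℝ) : Prop :=
  JFusionBounds J W v Ipos Ineg Bm Am Ap Bp ∧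
  ∀ Bm' Am' Ap' Bp' : ℝ, JFusionBounds J W v Ipos Ineg Bm' Am' Ap' Bp' →
    Bm' ≤ Bm ∧ Am ≤ Am' ∧ Ap' ≤ Ap ∧ Bp ≤ Bp'

/-- `{f i}` (with the partition `Ipos`, `Ineg` of the index set) is a `J`-frame for `𝕂`. -/
structure IsJFrame (J : 𝕂 →L[ℂ] 𝕂) (f : ι → 𝕂) (Ipos Ineg : Set ι) : Prop where
  partition : ∀ i : ι, (i ∈ Ipos ∧ i ∉ Ineg) ∨ (i ∈ Ineg ∧ i ∉ Ipos)
  nonneg : ∀ i ∈ Ipos, 0 ≤ (ip J (f i) (f i)).re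
  neg : ∀ i ∈ Ineg, (ip J (f i) (f i)).re < 0
  frame : ∃ C D : ℝ, 0 < C ∧ C ≤ D ∧ ∀ g : 𝕂,
    Summable (fun i => ‖@inner ℂ _ _ g (f i)‖ ^ 2) ∧
    C * ‖g‖ ^ 2 ≤ ∑' i, ‖@inner ℂ _ _ g (f i)‖ ^ 2 ∧
    ∑' i, ‖@inner ℂ _ _ g (f i)‖ ^ 2 ≤ D * ‖g‖ ^ 2
  max_pos : MaxUnifJPos J (Mspan f Ipos)
  max_neg : MaxUnifJNeg J (Mspan f Ineg)

/-- `Bm ≤ Am < 0 < Ap ≤ Bp` are `J`-frame bounds for `{f i}`: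
`A_± [g,g] ≤ Σ_{i ∈ I_±} |[g, f i]|² ≤ B_± [g,g]` for `g ∈ M_±`. -/
def JFrameBounds (J : 𝕂 →L[ℂ] 𝕂) (f : ι → 𝕂) (Ipos Ineg : Set ι)
    (Bm Am Ap Bp : ℝ) : Prop :=
  Bm ≤ Am ∧ Am < 0 ∧ 0 < Ap ∧ Ap ≤ Bp ∧
  (∀ g ∈ Mspan f Ipos,
    Summable (fun i : Ipos => ‖ip J g (f (i : ι))‖ ^ 2) ∧
    Ap * (ip J g g).re ≤ ∑' i : Ipos, ‖ip J g (f (i : ι))‖ ^ 2 ∧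
    ∑' i : Ipos, ‖ip J g (f (i : ι))‖ ^ 2 ≤ Bp * (ip J g g).re) ∧
  (∀ g ∈ Mspan f Ineg,
    Summable (fun i : Ineg => ‖ip J g (f (i : ι))‖ ^ 2) ∧
    Am * (ip J g g).re ≤ ∑' i : Ineg, ‖ip J g (f (i : ι))‖ ^ 2 ∧
    ∑' i : Ineg, ‖ip J g (f (i : ι))‖ ^ 2 ≤ Bm * (ip J g g).re)

/-- `(Bm, Am, Ap, Bp)` are the *optimal* `J`-frame bounds. -/
def OptJFrameBounds (J : 𝕂 →L[ℂ] 𝕂) (f : ι → 𝕂) (Ipos Ineg : Set ι)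
    (Bm Am Ap Bp : ℝ) : Prop :=
  JFrameBounds J f Ipos Ineg Bm Am Ap Bp ∧
  ∀ Bm' Am' Ap' Bp' : ℝ, JFrameBounds J f Ipos Ineg Bm' Am' Ap' Bp' →
    Bm' ≤ Bm ∧ Am ≤ Am' ∧ Ap' ≤ Ap ∧ Bp ≤ Bp'

end JFF

/-!
The range `R₊ = T(ℓ²(I₊))` is maximal uniformly `J`-positive, hence closed. So it contains `M₊`,
and by the open mapping theorem every `f ∈ M₊` is `T x` with `x` supported on `I₊` and
`‖x‖ ≤ C‖f‖`. The adjoint `T*` is the analysis operator `g ↦ (v_i π_{W_i} g)_i`, and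
`[π_{W_i} Jf, f] = ‖π_{W_i} Jf‖²`; hence the frame sum is `s = Σ_{I₊} ‖(T* Jf)_i‖² ≤ ‖T‖²‖J‖²‖f‖²`,
while Cauchy–Schwarz in `ℓ²` gives `[f,f] = ⟨T* Jf, x⟩ ≤ √s · C‖f‖`. Uniform positivity
`α‖f‖² ≤ [f,f]` turns both estimates into bounds by `[f,f]`. The negative part is the same
argument with `|[f,f]|` in place of `[f,f]`.
-/

section

variable {ι : Type*}

lemma lp.hasSum_norm_sq {G : ι → Type*} [∀ i, NormedAddCommGroup (G i)] (x : lp G 2) :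
    HasSum (fun i => ‖x i‖ ^ 2) (‖x‖ ^ 2) := by
  simpa using lp.hasSum_norm (p := 2) (by norm_num) x

lemma lp.norm_inner_le_of_forall_notMem {𝕜 : Type*} [RCLike 𝕜] {G : ι → Type*}
    [∀ i, NormedAddCommGroup (G i)] [∀ i, InnerProductSpace 𝕜 (G i)] {S : Set ι}
    (y x : lp G 2) (hx : ∀ i ∉ S, x i = 0) :
    ‖⟪y, x⟫_𝕜‖ ≤ √(∑' i : S, ‖y i‖ ^ 2) * ‖x‖ := by
  let y' : lp G 2 := ⟨fun i => if i ∈ S then y i else 0,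
    (lp.memℓp y).mono' fun i => by split_ifs <;> simp⟩
  have hinner : ⟪y, x⟫_𝕜 = ⟪y', x⟫_𝕜 := by
    rw [lp.inner_eq_tsum, lp.inner_eq_tsum]
    refine tsum_congr fun i => ?_
    by_cases hi : i ∈ S
    · simp [y', hi]
    · simp [hx i hi]
  have hnorm : ‖y'‖ = √(∑' i : S, ‖y i‖ ^ 2) := by
    rw [← Real.sqrt_sq (norm_nonneg y'), ← (lp.hasSum_norm_sq y').tsum_eq,
      tsum_subtype S fun i => ‖y i‖ ^ 2]
    congr 1
    refine tsum_congr fun i => ?_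
    by_cases hi : i ∈ S <;> simp [y', hi]
  rw [hinner, ← hnorm]
  exact norm_inner_le_norm _ _

lemma ContinuousLinearMap.exists_preimage_mem_norm_le {𝕜 E F : Type*}
    [NontriviallyNormedField 𝕜]
    [NormedAddCommGroup E] [NormedSpace 𝕜 E] [CompleteSpace E]
    [NormedAddCommGroup F] [NormedSpace 𝕜 F] [CompleteSpace F]
    (T : E →L[𝕜] F) {V : Submodule 𝕜 E} (hV : IsClosed (V : Set E))
    (hTV : IsClosed (V.map (T : E →ₗ[𝕜] F) : Set F)) :
    ∃ C > 0, ∀ y ∈ V.map (T : E →ₗ[𝕜] F), ∃ x ∈ V, T x = y ∧ ‖x‖ ≤ C * ‖y‖ := by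
  have := hV.completeSpace_coe
  have := hTV.completeSpace_coe
  let T' : V →L[𝕜] V.map (T : E →ₗ[𝕜] F) :=
    (T.comp V.subtypeL).codRestrict _ fun x => Submodule.mem_map_of_mem x.2
  obtain ⟨C, hC, hT'⟩ := T'.exists_preimage_norm_le <| by
    rintro ⟨y, x, hx, rfl⟩
    exact ⟨⟨x, hx⟩, rfl⟩
  refine ⟨C, hC, fun y hy => ?_⟩
  obtain ⟨x, hx, hxn⟩ := hT' ⟨y, hy⟩
  exact ⟨x, x.2, congrArg Subtype.val hx, hxn⟩

lemma div_sq_mul_le_of_le_mul_sqrt {α C u s n : ℝ} (hα : 0 < α) (hC : 0 < C) (hs : 0 ≤ s)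
    (hu : u ≤ C * √s * n) (hn : α * n ^ 2 ≤ u) : α / C ^ 2 * u ≤ s := by
  have hu0 : 0 ≤ u := le_trans (by positivity) hn
  have hsq : u ^ 2 ≤ C ^ 2 * s * n ^ 2 := by
    calc u ^ 2 ≤ (C * √s * n) ^ 2 := pow_le_pow_left₀ hu0 hu 2
      _ = C ^ 2 * s * n ^ 2 := by rw [mul_pow, mul_pow, Real.sq_sqrt hs]
  rw [div_mul_eq_mul_div, div_le_iff₀ (by positivity)]
  rcases hu0.eq_or_lt with rfl | hpos
  · rw [mul_zero]; positivity
  · nlinarith [mul_le_mul_of_nonneg_left hn (by positivity : 0 ≤ C ^ 2 * s)]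

end

namespace JFF

open scoped InnerProduct

variable {𝕂 : Type*} [NormedAddCommGroup 𝕂] [InnerProductSpace ℂ 𝕂] {ι : Type*}

section Projection

variable [CompleteSpace 𝕂]

lemma pr_eq_starProjection (M : Submodule ℂ 𝕂) [CompleteSpace M] : pr M = M.starProjection := by
  rw [pr, dif_pos (completeSpace_coe_iff_isComplete.1 ‹_›).isClosed]
  rfl

lemma norm_inner_pr_self (M : Submodule ℂ 𝕂) [CompleteSpace M] (y : 𝕂) :
    ‖⟪y, pr M y⟫_ℂ‖ = ‖pr M y‖ ^ 2 := by
  have hy : ⟪y, pr M y⟫_ℂ = ⟪pr M y, pr M y⟫_ℂ := by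
    rw [pr_eq_starProjection, ← sub_eq_zero, ← inner_sub_left,
      M.starProjection_inner_eq_zero y _ (M.starProjection_apply_mem y)]
  rw [hy, inner_self_eq_norm_sq_to_K, norm_pow, RCLike.norm_ofReal, abs_norm]

end Projection

lemma continuous_re_ip_self (J : 𝕂 →L[ℂ] 𝕂) : Continuous fun f => (ip J f f).re :=
  Complex.continuous_re.comp (J.continuous.inner continuous_id)

section Uniform

variable {J : 𝕂 →L[ℂ] 𝕂} {N : Submodule ℂ 𝕂}

lemma UnifJPos.topologicalClosure (h : UnifJPos J N) : UnifJPos J N.topologicalClosure := by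
  obtain ⟨α, hα, hN⟩ := h
  have hclosed : IsClosed {f : 𝕂 | α * ‖f‖ ^ 2 ≤ (ip J f f).re} :=
    isClosed_le (by fun_prop) (continuous_re_ip_self J)
  exact ⟨α, hα, fun f hf => closure_minimal hN hclosed (N.topologicalClosure_coe ▸ hf)⟩

lemma UnifJNeg.topologicalClosure (h : UnifJNeg J N) : UnifJNeg J N.topologicalClosure := by
  obtain ⟨α, hα, hN⟩ := h
  have hclosed : IsClosed {f : 𝕂 | (ip J f f).re ≤ -(α * ‖f‖ ^ 2)} :=
    isClosed_le (continuous_re_ip_self J) (by fun_prop)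
  exact ⟨α, hα, fun f hf => closure_minimal hN hclosed (N.topologicalClosure_coe ▸ hf)⟩

lemma MaxUnifJPos.isClosed (h : MaxUnifJPos J N) : IsClosed (N : Set 𝕂) :=
  h.2 _ h.1.topologicalClosure N.le_topologicalClosure ▸ N.isClosed_topologicalClosure

lemma MaxUnifJNeg.isClosed (h : MaxUnifJNeg J N) : IsClosed (N : Set 𝕂) :=
  h.2 _ h.1.topologicalClosure N.le_topologicalClosure ▸ N.isClosed_topologicalClosure

end Uniform

lemma isClosed_supp (W : ι → Submodule ℂ 𝕂) (S : Set ι) :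
    IsClosed (supp W S : Set (lp (fun i => W i) 2)) := by
  show IsClosed {x : lp (fun i => W i) 2 | ∀ i ∉ S, x i = 0}
  simp only [Set.ofPred_forall]
  exact isClosed_iInter fun i => isClosed_iInter fun _ =>
    isClosed_eq (lp.evalCLM ℂ (fun i => W i) 2 i).continuous continuous_const

section Synthesis

variable {W : ι → Submodule ℂ 𝕂} {v : ι → ℝ} {T : lp (fun i => W i) 2 →L[ℂ] 𝕂}

lemma IsSynth.apply_single (hT : IsSynth W v T) (i : ι) (w : W i) :
    T (lp.single 2 i w) = (v i : ℂ) • (w : 𝕂) := by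
  have hsingle : ∀ j ≠ i, (v j : ℂ) • ((lp.single 2 i w : lp (fun i => W i) 2) j : 𝕂) = 0 :=
    fun j hj => by rw [lp.single_apply_ne 2 i _ hj, Submodule.coe_zero, smul_zero]
  simpa [lp.single_apply_self] using (hT _).unique (hasSum_single i hsingle)

lemma IsSynth.le_rng (hT : IsSynth W v T) {S : Set ι} {i : ι} (hi : i ∈ S) (hv : v i ≠ 0) :
    W i ≤ rng T S := by
  intro w hw
  refine ⟨lp.single 2 i ((v i : ℂ)⁻¹ • ⟨w, hw⟩), fun j hj => ?_, ?_⟩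
  · exact lp.single_apply_ne 2 i _ fun h => hj (h ▸ hi)
  · rw [ContinuousLinearMap.coe_coe, hT.apply_single, Submodule.coe_smul, smul_smul,
      mul_inv_cancel₀ (Complex.ofReal_ne_zero.2 hv), one_smul]

lemma IsSynth.Mspace_le_rng (hT : IsSynth W v T) (hv : ∀ i, v i ≠ 0) {S : Set ι}
    (hcl : IsClosed (rng T S : Set 𝕂)) : Mspace W S ≤ rng T S :=
  Submodule.topologicalClosure_minimal _ (iSup₂_le fun _ hi => hT.le_rng hi (hv _)) hcl

variable [CompleteSpace 𝕂] [∀ i, CompleteSpace (W i)]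

lemma IsSynth.adjoint_apply (hT : IsSynth W v T) (g : 𝕂) (i : ι) :
    ((T†) g) i = (v i : ℂ) • (W i).orthogonalProjectionOnto g := by
  refine ext_inner_right ℂ fun w => ?_
  rw [← lp.inner_single_right, ContinuousLinearMap.adjoint_inner_left, hT.apply_single,
    inner_smul_right, inner_smul_left, Complex.conj_ofReal,
    Submodule.inner_orthogonalProjectionOnto_eq_of_mem_right]

lemma IsSynth.norm_adjoint_apply_sq (hT : IsSynth W v T) (g : 𝕂) (i : ι) :
    ‖((T†) g) i‖ ^ 2 = v i ^ 2 * ‖pr (W i) g‖ ^ 2 := by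
  rw [hT.adjoint_apply, norm_smul, Complex.norm_real, Real.norm_eq_abs, mul_pow, sq_abs,
    pr_eq_starProjection]
  rfl

theorem IsSynth.exists_bounds_of_uniform (J : 𝕂 →L[ℂ] 𝕂) (hT : IsSynth W v T)
    (hv : ∀ i, v i ≠ 0) {S : Set ι} (hcl : IsClosed (rng T S : Set 𝕂)) {α : ℝ} (hα : 0 < α)
    (hunif : ∀ f ∈ rng T S, α * ‖f‖ ^ 2 ≤ |(ip J f f).re|) :
    ∃ A B : ℝ, 0 < A ∧ A ≤ B ∧ ∀ f ∈ Mspace W S,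
      Summable (fun i : S => v i ^ 2 * ‖ip J (pr (W i) (J f)) f‖) ∧
      A * |(ip J f f).re| ≤ ∑' i : S, v i ^ 2 * ‖ip J (pr (W i) (J f)) f‖ ∧
      ∑' i : S, v i ^ 2 * ‖ip J (pr (W i) (J f)) f‖ ≤ B * |(ip J f f).re| := by
  obtain ⟨C, hC, hpre⟩ := T.exists_preimage_mem_norm_le (isClosed_supp W S) hcl
  set K := ‖T‖ ^ 2 * ‖J‖ ^ 2
  refine ⟨α / C ^ 2, max (K / α) (α / C ^ 2), by positivity, le_max_right _ _, fun f hf => ?_⟩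
  have hfr := hT.Mspace_le_rng hv hcl hf
  set a := (T†) (J f)
  have hterm (i : ι) : v i ^ 2 * ‖ip J (pr (W i) (J f)) f‖ = ‖a i‖ ^ 2 := by
    rw [hT.norm_adjoint_apply_sq, ip, norm_inner_pr_self]
  simp only [hterm]
  have ha := lp.hasSum_norm_sq a
  set s := ∑' i : S, ‖a i‖ ^ 2
  have hs0 : 0 ≤ s := tsum_nonneg fun _ => by positivity
  have hs_le : s ≤ K * ‖f‖ ^ 2 :=
    calc s ≤ ‖a‖ ^ 2 := ha.tsum_eq ▸ ha.summable.tsum_subtype_le _ S fun _ => by positivity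
      _ ≤ (‖T‖ * (‖J‖ * ‖f‖)) ^ 2 := by
        gcongr
        calc ‖a‖ ≤ ‖T†‖ * ‖J f‖ := (T†).le_opNorm _
          _ ≤ ‖T‖ * (‖J‖ * ‖f‖) := by
            rw [LinearIsometryEquiv.norm_map]; gcongr; exact J.le_opNorm f
      _ = K * ‖f‖ ^ 2 := by ring
  have hre_le : |(ip J f f).re| ≤ C * √s * ‖f‖ := by
    obtain ⟨x, hx, hTx, hxn⟩ := hpre f hfr
    calc |(ip J f f).re| ≤ ‖ip J f f‖ := Complex.abs_re_le_norm _
      _ = ‖⟪a, x⟫_ℂ‖ := by rw [ContinuousLinearMap.adjoint_inner_left, hTx, ip]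
      _ ≤ √s * ‖x‖ := lp.norm_inner_le_of_forall_notMem a x hx
      _ ≤ √s * (C * ‖f‖) := by gcongr
      _ = C * √s * ‖f‖ := by ring
  refine ⟨ha.summable.subtype S,
    div_sq_mul_le_of_le_mul_sqrt hα hC hs0 hre_le (hunif f hfr), ?_⟩
  calc s ≤ K * ‖f‖ ^ 2 := hs_le
    _ = K / α * (α * ‖f‖ ^ 2) := by field_simp
    _ ≤ K / α * |(ip J f f).re| := by gcongr; exact hunif f hfr
    _ ≤ max (K / α) (α / C ^ 2) * |(ip J f f).re| := by gcongr; exact le_max_left _ _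

end Synthesis

theorem stmt6_general {𝕂 : Type*} [NormedAddCommGroup 𝕂] [InnerProductSpace ℂ 𝕂] [CompleteSpace 𝕂]
    {ι : Type*} (J : 𝕂 →L[ℂ] 𝕂)
    (W : ι → Submodule ℂ 𝕂) (hWc : ∀ i, IsClosed ((W i : Set 𝕂)))
    (v : ι → ℝ) (Ipos Ineg : Set ι)
    (T : lp (fun i => W i) 2 →L[ℂ] 𝕂)
    (hF : IsJFusionFrame J W v Ipos Ineg T) :
    ∃ Bm Am Ap Bp : ℝ, JFusionBounds J W v Ipos Ineg Bm Am Ap Bp := by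
  have := fun i => (hWc i).completeSpace_coe
  have hv (i : ι) : v i ≠ 0 := (hF.weights i).ne'
  have hclp := hF.max_pos.isClosed
  have hclm := hF.max_neg.isClosed
  obtain ⟨αp, hαp, hposp⟩ := hF.max_pos.1
  obtain ⟨αm, hαm, hnegm⟩ := hF.max_neg.1
  obtain ⟨Ap, Bp, hAp, hApBp, hboundp⟩ := hF.synth.exists_bounds_of_uniform J hv hclp hαp
    fun f hf => (hposp f hf).trans (le_abs_self _)
  obtain ⟨Am, Bm, hAm, hAmBm, hboundm⟩ := hF.synth.exists_bounds_of_uniform J hv hclm hαm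
    fun f hf => (le_neg.1 (hnegm f hf)).trans (neg_le_abs _)
  refine ⟨-Bm, -Am, Ap, Bp, neg_le_neg hAmBm, neg_neg_of_pos hAm, hAp, hApBp,
    fun f hf => ?_, fun f hf => ?_⟩
  · have hre : 0 ≤ (ip J f f).re :=
      (by positivity : 0 ≤ αp * ‖f‖ ^ 2).trans (hposp f (hF.synth.Mspace_le_rng hv hclp hf))
    simpa only [abs_of_nonneg hre] using hboundp f hf
  · have hre : (ip J f f).re ≤ 0 :=
      (hnegm f (hF.synth.Mspace_le_rng hv hclm hf)).trans (by simp only [neg_nonpos]; positivity)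
    simpa only [abs_of_nonpos hre, mul_neg, neg_mul] using hboundm f hf

/-- Every `J`-fusion frame `{(W i, v i)}` for `𝕂` admits `J`-fusion frame
bounds `-∞ < B₋ ≤ A₋ < 0 < A₊ ≤ B₊ < ∞`, i.e. `{(W i, v i) : i ∈ I_±}` is a fusion frame
for `(M_±, ±[·,·])`:
`A_± [f,f] ≤ Σ_{i∈I_±} v_i² |[π_{W_i}(Jf), f]| ≤ B_± [f,f]` for every `f ∈ M_±`. -/
theorem stmt6 {𝕂 : Type*} [NormedAddCommGroup 𝕂] [InnerProductSpace ℂ 𝕂] [CompleteSpace 𝕂]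
    {ι : Type*} (J : 𝕂 →L[ℂ] 𝕂) (hJ : IsFundSym J)
    (W : ι → Submodule ℂ 𝕂) (hWc : ∀ i, IsClosed ((W i : Set 𝕂)))
    (v : ι → ℝ) (Ipos Ineg : Set ι)
    (T : lp (fun i => W i) 2 →L[ℂ] 𝕂)
    (hF : IsJFusionFrame J W v Ipos Ineg T) :
    ∃ Bm Am Ap Bp : ℝ, JFusionBounds J W v Ipos Ineg Bm Am Ap Bp :=
  stmt6_general J W hWc v Ipos Ineg T hF

end JFF
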